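/- arXiv:0705.0432 — 3 statements merged into one kernel-verified Lean document; each statement's English description precedes it below -/
import Mathlib

section
/- Let ω belong to the Bari–Stechkin class and suppose Σ_{k=1}^∞ [ω(1/k)]² < ∞. If a is a continuous N×N matrix function on 𝕋 all of whose entries belong to 𝓗^ω, then Σ_{k∈ℤ} ‖a_k‖² |k| < ∞, where a_k is the k-th Fourier coefficient of a and ‖·‖ is any fixed matrix norm on ℂ^{N×N} (equivalently, Σ_{k∈ℤ} Σ_{α,β=1}^N |(a_k)_{αβ}|² |k| < ∞). In other words, 𝓗^ω_{N×N} is contained in the Krein algebra (K_{2,2}^{1/2,1/2})_{N×N}. -/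
open scoped Real
open Filter MeasureTheory

noncomputable section

/-- Modulus of continuity of `f : ℝ → ℂ` (viewed as a `2π`-periodic function on the circle). -/
def mc (f : ℝ → ℂ) (x : ℝ) : ℝ :=
  sSup {r : ℝ | ∃ h y : ℝ, |h| ≤ x ∧ r = ‖f (y + h) - f y‖}

/-- The Bari–Stechkin class. -/
def BariStechkin (w : ℝ → ℝ) : Prop :=
  (∃ A : ℝ, 0 < A ∧ ∀ x y : ℝ, 0 < x → x ≤ y → y ≤ π → w x ≤ A * w y) ∧
  (∀ x : ℝ, 0 < x → x ≤ π → 0 < w x) ∧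
  Tendsto w (nhdsWithin 0 (Set.Ioi 0)) (nhds 0) ∧
  (∀ x : ℝ, 0 < x → x ≤ π → IntervalIntegrable (fun y => w y / y) volume 0 x) ∧
  (∃ B : ℝ, ∀ x : ℝ, 0 < x → x ≤ π → (∫ y in (0:ℝ)..x, w y / y) ≤ B * w x) ∧
  (∀ x : ℝ, 0 < x → x ≤ π → IntervalIntegrable (fun y => w y / y ^ 2) volume x π) ∧
  (∃ B : ℝ, ∀ x : ℝ, 0 < x → x ≤ π → x * (∫ y in x..π, w y / y ^ 2) ≤ B * w x)

/-- Membership in the generalized Hölder space `𝓗^ω`. -/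
def MemH (w : ℝ → ℝ) (f : ℝ → ℂ) : Prop :=
  Continuous f ∧ Function.Periodic f (2 * π) ∧
    ∃ C : ℝ, ∀ x : ℝ, 0 < x → x ≤ π → mc f x ≤ C * w x

/-- Membership in `𝓗₀^ω`. -/
def MemH0 (w : ℝ → ℝ) (f : ℝ → ℂ) : Prop :=
  MemH w f ∧ Tendsto (fun x => mc f x / w x) (nhdsWithin 0 (Set.Ioi 0)) (nhds 0)

/-- The `k`-th Fourier coefficient of a function on the circle. -/
def fc (f : ℝ → ℂ) (k : ℤ) : ℂ :=
  (1 / (2 * (π : ℂ))) * ∫ θ in (0:ℝ)..(2 * π), f θ * Complex.exp (-(Complex.I * (k : ℂ) * (θ : ℂ)))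

/-- Fourier coefficients of a matrix function, computed entrywise. -/
def Fc {N : ℕ} (a : ℝ → Matrix (Fin N) (Fin N) ℂ) (k : ℤ) : Matrix (Fin N) (Fin N) ℂ :=
  Matrix.of fun α β => fc (fun θ => a θ α β) k

/-- `ã(t) := a(1/t)`, i.e. `θ ↦ a (−θ)`. -/
def tilde {N : ℕ} (a : ℝ → Matrix (Fin N) (Fin N) ℂ) : ℝ → Matrix (Fin N) (Fin N) ℂ :=
  fun θ => a (-θ)

/-- The Hilbert space `ℓ²(ℕ, ℂ^N)`. -/
abbrev HS (N : ℕ) : Type := lp (fun _ : ℕ => EuclideanSpace ℂ (Fin N)) 2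

/-- The standard basis vectors of `ℓ²(ℕ, ℂ^N)`. -/
def ebasis (N : ℕ) (j : ℕ) (α : Fin N) : HS N :=
  lp.single 2 j (EuclideanSpace.single α 1)

/-- `T` is the block Toeplitz operator with symbol `a`. -/
def IsToeplitz {N : ℕ} (a : ℝ → Matrix (Fin N) (Fin N) ℂ) (T : HS N →L[ℂ] HS N) : Prop :=
  ∀ (j k : ℕ) (α β : Fin N),
    (inner ℂ (ebasis N j α) (T (ebasis N k β)) : ℂ) = Fc a ((j : ℤ) - (k : ℤ)) α β

/-- `Ha` is the block Hankel operator with symbol `a`. -/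
def IsHankel {N : ℕ} (a : ℝ → Matrix (Fin N) (Fin N) ℂ) (Ha : HS N →L[ℂ] HS N) : Prop :=
  ∀ (j k : ℕ) (α β : Fin N),
    (inner ℂ (ebasis N j α) (Ha (ebasis N k β)) : ℂ) = Fc a ((j : ℤ) + (k : ℤ) + 1) α β

/-- Invertibility of the Toeplitz operator `T(a)` on `ℓ²(ℕ, ℂ^N)`. -/
def ToeplitzInvertible {N : ℕ} (a : ℝ → Matrix (Fin N) (Fin N) ℂ) : Prop :=
  ∃ T : HS N ≃L[ℂ] HS N, IsToeplitz a (T : HS N →L[ℂ] HS N)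

/-- The finite block Toeplitz matrix `T_n(a)`. -/
def Tmat {N : ℕ} (a : ℝ → Matrix (Fin N) (Fin N) ℂ) (n : ℕ) :
    Matrix (Fin (n + 1) × Fin N) (Fin (n + 1) × Fin N) ℂ :=
  Matrix.of fun p q => Fc a ((p.1 : ℤ) - (q.1 : ℤ)) p.2 q.2

/-- Matrix functions with entries in `𝓗^ω` and Fourier coefficients vanishing
at positive indices. -/
def MemHMinus (w : ℝ → ℝ) {N : ℕ} (u : ℝ → Matrix (Fin N) (Fin N) ℂ) : Prop :=
  (∀ α β, MemH w (fun θ => u θ α β)) ∧ ∀ k : ℤ, 0 < k → Fc u k = 0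

/-- Matrix functions with entries in `𝓗^ω` and Fourier coefficients vanishing
at negative indices. -/
def MemHPlus (w : ℝ → ℝ) {N : ℕ} (u : ℝ → Matrix (Fin N) (Fin N) ℂ) : Prop :=
  (∀ α β, MemH w (fun θ => u θ α β)) ∧ ∀ k : ℤ, k < 0 → Fc u k = 0

/-- Bounded measurable (`2π`-periodic) matrix functions: `L^∞_{N×N}`. -/
def MemLinf {N : ℕ} (v : ℝ → Matrix (Fin N) (Fin N) ℂ) : Prop :=
  (∀ α β, Measurable (fun θ => v θ α β)) ∧
  (∀ α β, Function.Periodic (fun θ => v θ α β) (2 * π)) ∧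
  ∃ M : ℝ, ∀ θ α β, ‖v θ α β‖ ≤ M

/-- `\overline{H^∞}_{N×N}`. -/
def MemHinfMinus {N : ℕ} (v : ℝ → Matrix (Fin N) (Fin N) ℂ) : Prop :=
  MemLinf v ∧ ∀ k : ℤ, 0 < k → Fc v k = 0

/-- `H^∞_{N×N}`. -/
def MemHinfPlus {N : ℕ} (v : ℝ → Matrix (Fin N) (Fin N) ℂ) : Prop :=
  MemLinf v ∧ ∀ k : ℤ, k < 0 → Fc v k = 0

/-- The projection `P_n` on `ℓ²(ℕ, ℂ^N)`. -/
def Pn (N n : ℕ) : HS N →L[ℂ] HS N :=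
  ∑ j ∈ Finset.range (n + 1), ∑ α : Fin N,
    (innerSL ℂ (ebasis N j α)).smulRight (ebasis N j α)

/-- The complementary projection `Q_n`. -/
def Qn (N n : ℕ) : HS N →L[ℂ] HS N := ContinuousLinearMap.id ℂ (HS N) - Pn N n

/-- `Δ_0 := P_0`, `Δ_j := P_j − P_{j−1}`. -/
def Dl (N j : ℕ) : HS N →L[ℂ] HS N := if j = 0 then Pn N 0 else Pn N j - Pn N (j - 1)

/-- The operator `F_{n,k}(b,c)`, built from given Toeplitz/Hankel operators. -/
def Fop {N : ℕ} (Tb Tc Hb Hct : HS N →L[ℂ] HS N) (n k : ℕ) : HS N →L[ℂ] HS N :=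
  (Pn N n) ∘L Tc ∘L (Qn N n) ∘L (((Qn N n) ∘L Hb ∘L Hct ∘L (Qn N n)) ^ k) ∘L
    (Qn N n) ∘L Tb ∘L (Pn N n)

/-- Trace of an operator supported on the range of `P_n`. -/
def trOp {N : ℕ} (A : HS N →L[ℂ] HS N) (n : ℕ) : ℂ :=
  ∑ j ∈ Finset.range (n + 1), ∑ α : Fin N, (inner ℂ (ebasis N j α) (A (ebasis N j α)) : ℂ)

/-- The `N×N` matrix `G_{ℓ,k}(b,c)`. -/
def Gmat {N : ℕ} (Tb Tc Hb Hct : HS N →L[ℂ] HS N) (l k : ℕ) : Matrix (Fin N) (Fin N) ℂ :=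
  Matrix.of fun α β =>
    (inner ℂ (ebasis N 0 α)
      (((Pn N 0) ∘L Tc ∘L (Qn N l) ∘L (((Qn N l) ∘L Hb ∘L Hct ∘L (Qn N l)) ^ k) ∘L
        (Qn N l) ∘L Tb ∘L (Pn N 0)) (ebasis N 0 β)) : ℂ)

/-- Sup-norm of a scalar function. -/
def supNorm (f : ℝ → ℂ) : ℝ := sSup {r : ℝ | ∃ θ : ℝ, r = ‖f θ‖}

/-- The Hölder seminorm `|f|_ω`. -/
def hSemi (w : ℝ → ℝ) (f : ℝ → ℂ) : ℝ :=
  sSup {r : ℝ | ∃ x : ℝ, 0 < x ∧ x ≤ π ∧ r = mc f x / w x}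

/-- `L^∞` norm of a matrix function: `N · max_{α,β} esssup |a_{αβ}|`. -/
def linfNorm {N : ℕ} (v : ℝ → Matrix (Fin N) (Fin N) ℂ) : ℝ :=
  N * sSup {r : ℝ | ∃ α β : Fin N, r = essSup (fun θ => ‖v θ α β‖) volume}

/-- `max_{α,β} ω(u_{αβ}, x)`. -/
def mcMax {N : ℕ} (u : ℝ → Matrix (Fin N) (Fin N) ℂ) (x : ℝ) : ℝ :=
  sSup {r : ℝ | ∃ α β : Fin N, r = mc (fun θ => u θ α β) x}

/-- The norm `max_{α,β} (‖·‖_∞ + |·|_ω)` on matrix Hölder functions. -/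
def hNormMat (w : ℝ → ℝ) {N : ℕ} (u : ℝ → Matrix (Fin N) (Fin N) ℂ) : ℝ :=
  sSup {r : ℝ | ∃ α β : Fin N,
    r = supNorm (fun θ => u θ α β) + hSemi w (fun θ => u θ α β)}

/-- Approximation numbers of a bounded operator on `ℓ²(ℕ, ℂ^N)`. -/
def sNum {N : ℕ} (A : HS N →L[ℂ] HS N) (n : ℕ) : ℝ :=
  sInf {r : ℝ | ∃ F : HS N →L[ℂ] HS N,
    Module.rank ℂ (LinearMap.range (F.toLinearMap)) ≤ (n : Cardinal) ∧ r = ‖A - F‖}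

/-!
For `h > 0`, the Fourier coefficients of `θ ↦ f (θ + h) - f θ` are `(e^{ikh} - 1) f_k`, and
`|e^{ikh} - 1|` is bounded below on the block `m ≤ |k| < 2m` when `h = 1/(2m)`. Bessel's
inequality therefore gives `∑_{m ≤ |k| < 2m} |f_k|² ≲ ω(f, 1/(2m))² ≲ ω(1/m)²`, using that `ω` is
almost increasing. Every `k` lies in about `|k|/2` of these blocks, so summing over all `m`
bounds `∑ |k| |f_k|²` by a multiple of `∑ ω(1/m)² < ∞`. Matrix functions are handled entrywise.
-/
lemma fc_eq_fourierCoeffOn (f : ℝ → ℂ) (k : ℤ) :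
    fc f k = fourierCoeffOn Real.two_pi_pos f k := by
  rw [fourierCoeffOn_eq_integral, fc, sub_zero, Complex.real_smul]
  push_cast
  congr 1
  refine intervalIntegral.integral_congr fun θ _ => ?_
  have hπ : (π : ℂ) ≠ 0 := Complex.ofReal_ne_zero.mpr Real.pi_ne_zero
  rw [fourier_coe_apply, smul_eq_mul, mul_comm]
  congr 2
  field_simp
  push_cast
  ring

lemma sum_norm_fc_sq_le {f : ℝ → ℂ} (hf : Continuous f) {M : ℝ}
    (hM : ∀ θ, ‖f θ‖ ≤ M) (s : Finset ℤ) :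
    ∑ k ∈ s, ‖fc f k‖ ^ 2 ≤ M ^ 2 := by
  have hL2 : MemLp f 2 (volume.restrict (Set.Ioc 0 (2 * π))) :=
    .of_bound hf.aestronglyMeasurable M (.of_forall hM)
  have hparseval := hasSum_sq_fourierCoeffOn Real.two_pi_pos hL2
  simp only [← fc_eq_fourierCoeffOn, sub_zero] at hparseval
  calc ∑ k ∈ s, ‖fc f k‖ ^ 2 ≤ (2 * π)⁻¹ • ∫ θ in (0:ℝ)..2 * π, ‖f θ‖ ^ 2 :=
        sum_le_hasSum s (fun _ _ => sq_nonneg _) hparseval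
    _ ≤ (2 * π)⁻¹ • ∫ θ in (0:ℝ)..2 * π, M ^ 2 := by
        gcongr
        refine intervalIntegral.integral_mono_on Real.two_pi_pos.le
          ((by fun_prop : Continuous fun θ => ‖f θ‖ ^ 2).intervalIntegrable _ _)
          intervalIntegrable_const fun θ _ => ?_
        gcongr
        exact hM θ
    _ = M ^ 2 := by
        rw [intervalIntegral.integral_const, sub_zero, smul_eq_mul, smul_eq_mul,
          inv_mul_cancel_left₀ Real.two_pi_pos.ne']

lemma fc_sub {f g : ℝ → ℂ} (hf : Continuous f) (hg : Continuous g) (k : ℤ) :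
    fc (fun θ => f θ - g θ) k = fc f k - fc g k := by
  simp only [fc, sub_mul]
  rw [intervalIntegral.integral_sub ((by fun_prop : Continuous _).intervalIntegrable _ _)
    ((by fun_prop : Continuous _).intervalIntegrable _ _), mul_sub]

lemma fc_comp_add_right {f : ℝ → ℂ} (hf : Function.Periodic f (2 * π)) (h : ℝ) (k : ℤ) :
    fc (fun θ => f (θ + h)) k = Complex.exp (Complex.I * (k * h : ℝ)) * fc f k := by
  set φ : ℝ → ℂ := fun θ => f θ * Complex.exp (-(Complex.I * k * θ))
  have hφ : Function.Periodic φ (2 * π) := fun θ => by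
    simp only [φ, hf θ]
    rw [show -(Complex.I * k * ((θ + 2 * π : ℝ) : ℂ))
        = -(Complex.I * k * θ) + (-k : ℤ) * (2 * π * Complex.I) by push_cast; ring,
      Complex.exp_add, Complex.exp_int_mul_two_pi_mul_I, mul_one]
  have hshift : ∀ θ : ℝ, f (θ + h) * Complex.exp (-(Complex.I * k * θ))
      = Complex.exp (Complex.I * (k * h : ℝ)) * φ (θ + h) := fun θ => by
    simp only [φ, mul_left_comm _ (f _), ← Complex.exp_add]
    push_cast
    ring_nf
  simp only [fc, hshift, intervalIntegral.integral_const_mul,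
    intervalIntegral.integral_comp_add_right φ h, zero_add]
  rw [add_comm _ h, hφ.intervalIntegral_add_eq h 0, zero_add]
  ring

lemma two_mul_sin_le_norm_exp_I_mul_sub_one {x : ℝ} (h₁ : 1 / 2 ≤ |x|) (h₂ : |x| ≤ 1) :
    2 * Real.sin (1 / 4) ≤ ‖Complex.exp (Complex.I * x) - 1‖ := by
  rw [Complex.norm_exp_I_mul_ofReal_sub_one, norm_mul, Real.norm_two, Real.norm_eq_abs,
    Real.abs_sin_eq_sin_abs_of_abs_le_pi (by rw [abs_div, abs_two]; linarith [Real.pi_gt_three]),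
    abs_div, abs_two]
  gcongr
  apply Real.sin_le_sin_of_le_of_le_pi_div_two <;> linarith [Real.pi_gt_three]

lemma sum_norm_fc_sq_le_of_norm_sub_le {f : ℝ → ℂ} (hc : Continuous f)
    (hp : Function.Periodic f (2 * π)) {h M : ℝ} (hh : 0 < h)
    (hM : ∀ θ, ‖f (θ + h) - f θ‖ ≤ M) (s : Finset ℤ)
    (hs : ∀ k ∈ s, 1 / 2 ≤ |(k : ℝ)| * h ∧ |(k : ℝ)| * h ≤ 1) :
    (2 * Real.sin (1 / 4)) ^ 2 * ∑ k ∈ s, ‖fc f k‖ ^ 2 ≤ M ^ 2 := by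
  have hsin : 0 ≤ 2 * Real.sin (1 / 4) := mul_nonneg zero_le_two
    (Real.sin_nonneg_of_nonneg_of_le_pi (by norm_num) (by linarith [Real.pi_gt_three]))
  have hcoeff : ∀ k : ℤ, fc (fun θ => f (θ + h) - f θ) k
      = (Complex.exp (Complex.I * (k * h : ℝ)) - 1) * fc f k := fun k => by
    rw [fc_sub (by fun_prop) hc, fc_comp_add_right hp]
    ring
  calc (2 * Real.sin (1 / 4)) ^ 2 * ∑ k ∈ s, ‖fc f k‖ ^ 2
      ≤ ∑ k ∈ s, ‖fc (fun θ => f (θ + h) - f θ) k‖ ^ 2 := by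
        rw [Finset.mul_sum]
        refine Finset.sum_le_sum fun k hk => ?_
        rw [hcoeff, norm_mul, mul_pow ‖Complex.exp (Complex.I * (k * h : ℝ)) - 1‖]
        refine mul_le_mul_of_nonneg_right (pow_le_pow_left₀ hsin ?_ 2) (sq_nonneg _)
        obtain ⟨hk₁, hk₂⟩ := hs k hk
        rw [← abs_of_pos hh, ← abs_mul] at hk₁ hk₂
        exact two_mul_sin_le_norm_exp_I_mul_sub_one hk₁ hk₂
    _ ≤ M ^ 2 := sum_norm_fc_sq_le (by fun_prop) hM s

lemma norm_sub_le_mc {f : ℝ → ℂ} (hf : Bornology.IsBounded (Set.range f)) {x h : ℝ}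
    (hh : |h| ≤ x) (y : ℝ) : ‖f (y + h) - f y‖ ≤ mc f x := by
  obtain ⟨C, hC⟩ := isBounded_iff_forall_norm_le.mp hf
  refine le_csSup ⟨C + C, ?_⟩ ⟨h, y, hh, rfl⟩
  rintro _ ⟨h', y', -, rfl⟩
  exact (norm_sub_le _ _).trans (add_le_add (hC _ ⟨_, rfl⟩) (hC _ ⟨_, rfl⟩))

lemma summable_mul_abs_of_sum_block_le {b : ℤ → ℝ} {v : ℕ → ℝ} (hb : ∀ k, 0 ≤ b k)
    (hv : Summable v)
    (hblock : ∀ (m : ℕ) (s : Finset ℤ),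
      (∀ k ∈ s, m + 1 ≤ k.natAbs ∧ k.natAbs < 2 * (m + 1)) → ∑ k ∈ s, b k ≤ v m) :
    Summable fun k : ℤ => b k * |(k : ℝ)| := by
  have hv0 : ∀ m, 0 ≤ v m := fun m => by simpa using hblock m ∅ (by simp)
  refine summable_of_sum_le (c := 2 * ∑' m, v m)
    (fun k => mul_nonneg (hb k) (abs_nonneg _)) fun u => ?_
  set n : ℕ := u.sup Int.natAbs
  have hcount : ∀ k ∈ u, b k * |(k : ℝ)|
      ≤ 2 * ∑ _m ∈ Finset.Ico (k.natAbs / 2) k.natAbs, b k := fun k _ => by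
    rw [Finset.sum_const, Nat.card_Ico, nsmul_eq_mul, ← Int.cast_abs, ← Nat.cast_natAbs,
      mul_comm (b k), ← mul_assoc]
    refine mul_le_mul_of_nonneg_right ?_ (hb k)
    have : k.natAbs ≤ 2 * (k.natAbs - k.natAbs / 2) := by omega
    exact_mod_cast this
  have hswap : ∑ k ∈ u, ∑ _m ∈ Finset.Ico (k.natAbs / 2) k.natAbs, b k
      = ∑ m ∈ Finset.range n, ∑ k ∈ u with m + 1 ≤ k.natAbs ∧ k.natAbs < 2 * (m + 1), b k := by
    refine Finset.sum_comm' fun k m => ?_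
    simp only [Finset.mem_Ico, Finset.mem_filter, Finset.mem_range]
    constructor
    · rintro ⟨hk, h₁, h₂⟩
      have : k.natAbs ≤ n := Finset.le_sup hk
      exact ⟨⟨hk, by omega, by omega⟩, by omega⟩
    · rintro ⟨⟨hk, h₁, h₂⟩, -⟩
      exact ⟨hk, by omega, by omega⟩
  calc ∑ k ∈ u, b k * |(k : ℝ)|
      ≤ 2 * ∑ k ∈ u, ∑ _m ∈ Finset.Ico (k.natAbs / 2) k.natAbs, b k := by
        rw [Finset.mul_sum]; exact Finset.sum_le_sum hcount
    _ ≤ 2 * ∑ m ∈ Finset.range n, v m := by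
        rw [hswap]
        gcongr with m
        exact hblock m _ fun k hk => (Finset.mem_filter.mp hk).2
    _ ≤ 2 * ∑' m, v m := by
        gcongr
        exact hv.sum_le_tsum _ fun m _ => hv0 m

lemma summable_norm_fc_sq_mul_abs {w : ℝ → ℝ} (hw₀ : ∀ x, 0 < x → x ≤ π → 0 ≤ w x)
    (hw : ∃ A : ℝ, ∀ x y : ℝ, 0 < x → x ≤ y → y ≤ π → w x ≤ A * w y)
    (hsum : Summable fun k : ℕ => w (1 / (k + 1 : ℝ)) ^ 2) {f : ℝ → ℂ} (hf : MemH w f) :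
    Summable fun k : ℤ => ‖fc f k‖ ^ 2 * |(k : ℝ)| := by
  obtain ⟨hc, hp, C, hC⟩ := hf
  obtain ⟨A, hA⟩ := hw
  have hbdd := hp.isBounded_of_continuous Real.two_pi_pos.ne' hc
  set c := (2 * Real.sin (1 / 4)) ^ 2
  have hc₀ : 0 < c := by
    have := Real.sin_pos_of_pos_of_lt_pi (x := 1 / 4) (by norm_num)
      (by linarith [Real.pi_gt_three])
    positivity
  have hstep : ∀ m : ℕ, 0 < 1 / (2 * (m + 1 : ℝ)) ∧ 1 / (2 * (m + 1 : ℝ)) ≤ 1 / (m + 1 : ℝ) ∧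
      1 / (m + 1 : ℝ) ≤ π := fun m => by
    refine ⟨by positivity, by gcongr; linarith, ?_⟩
    rw [div_le_iff₀ (by positivity)]
    nlinarith [Real.pi_gt_three, (Nat.cast_nonneg m : (0 : ℝ) ≤ m)]
  refine summable_mul_abs_of_sum_block_le
    (v := fun m => (C * w (1 / (2 * (m + 1 : ℝ)))) ^ 2 / c) (fun k => sq_nonneg _) ?_
    fun m s hs => ?_
  · refine Summable.of_nonneg_of_le (fun m => by positivity) (fun m => ?_)
      (hsum.mul_left ((C * A) ^ 2 / c))
    obtain ⟨h₀, hle, hπ⟩ := hstep m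
    have : w (1 / (2 * (m + 1 : ℝ))) ^ 2 ≤ (A * w (1 / (m + 1 : ℝ))) ^ 2 :=
      pow_le_pow_left₀ (hw₀ _ h₀ (hle.trans hπ)) (hA _ _ h₀ hle hπ) 2
    calc (C * w (1 / (2 * (m + 1 : ℝ)))) ^ 2 / c
        = C ^ 2 * w (1 / (2 * (m + 1 : ℝ))) ^ 2 / c := by ring
      _ ≤ C ^ 2 * (A * w (1 / (m + 1 : ℝ))) ^ 2 / c := by gcongr
      _ = (C * A) ^ 2 / c * w (1 / (m + 1 : ℝ)) ^ 2 := by ring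
  · obtain ⟨h₀, hle, hπ⟩ := hstep m
    rw [le_div_iff₀ hc₀, mul_comm]
    refine sum_norm_fc_sq_le_of_norm_sub_le hc hp h₀
      (fun θ => (norm_sub_le_mc hbdd (abs_of_pos h₀).le θ).trans (hC _ h₀ (hle.trans hπ)))
      s fun k hk => ?_
    have hk₁ : (m + 1 : ℝ) ≤ k.natAbs := by exact_mod_cast (hs k hk).1
    have hk₂ : (k.natAbs : ℝ) < 2 * (m + 1) := by exact_mod_cast (hs k hk).2
    have hm : (0 : ℝ) < 2 * (m + 1) := by positivity
    rw [← Int.cast_abs, ← Nat.cast_natAbs, ← div_eq_mul_one_div, le_div_iff₀ hm, div_le_one hm]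
    constructor <;> linarith

/-- If `Σ [ω(1/k)]² < ∞`, then `𝓗^ω_{N×N}` is contained in the Krein
algebra: `Σ_{k∈ℤ} ‖a_k‖² |k| < ∞`. -/
theorem stmt5 {N : ℕ} (w : ℝ → ℝ) (hw : BariStechkin w)
    (hsum : Summable (fun k : ℕ => (w (1 / (k + 1 : ℝ))) ^ 2))
    (a : ℝ → Matrix (Fin N) (Fin N) ℂ)
    (ha : ∀ α β, MemH w (fun θ => a θ α β)) :
    Summable (fun k : ℤ => (∑ α : Fin N, ∑ β : Fin N, ‖Fc a k α β‖ ^ 2) * |(k : ℝ)|) := by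
  obtain ⟨⟨A, -, hA⟩, hw₀, -⟩ := hw
  simp only [Finset.sum_mul]
  exact summable_sum fun α _ => summable_sum fun β _ =>
    summable_norm_fc_sq_mul_abs (fun x hx hxπ => (hw₀ x hx hxπ).le) ⟨A, hA⟩ hsum (ha α β)
end
end

section
/- Let ω belong to the Bari–Stechkin class and let 𝓗 be either 𝓗^ω or 𝓗₀^ω. A function f ∈ 𝓗 is invertible in 𝓗 (i.e., there exists g ∈ 𝓗 with f(t)g(t) = 1 for all t ∈ 𝕋) if and only if f(t) ≠ 0 for all t ∈ 𝕋. -/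
open scoped Real
open Filter MeasureTheory

noncomputable section

open Function

lemma mc_nonneg (f : ℝ → ℂ) (x : ℝ) : 0 ≤ mc f x :=
  Real.sSup_nonneg fun _ ⟨_, _, _, hr⟩ => hr ▸ norm_nonneg _

lemma mc_le_mul_mc {f g : ℝ → ℂ} {M c : ℝ} (hf : ∀ θ, ‖f θ‖ ≤ M) (hc : 0 ≤ c)
    (hgf : ∀ a b, ‖g a - g b‖ ≤ c * ‖f a - f b‖) (x : ℝ) : mc g x ≤ c * mc f x := by
  have hbdd : BddAbove {r : ℝ | ∃ h y : ℝ, |h| ≤ x ∧ r = ‖f (y + h) - f y‖} := by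
    refine ⟨2 * M, ?_⟩
    rintro _ ⟨h, y, -, rfl⟩
    linarith [norm_sub_le (f (y + h)) (f y), hf (y + h), hf y]
  refine Real.sSup_le ?_ (mul_nonneg hc (mc_nonneg f x))
  rintro _ ⟨h, y, hh, rfl⟩
  exact (hgf _ _).trans (mul_le_mul_of_nonneg_left (le_csSup hbdd ⟨h, y, hh, rfl⟩) hc)

lemma norm_inv_sub_inv_le {𝕜 : Type*} [NormedDivisionRing 𝕜] {a b : 𝕜} {m : ℝ} (hm : 0 < m)
    (ha : m ≤ ‖a‖) (hb : m ≤ ‖b‖) : ‖a⁻¹ - b⁻¹‖ ≤ (m ^ 2)⁻¹ * ‖a - b‖ := by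
  have ha₀ : a ≠ 0 := norm_pos_iff.mp (hm.trans_le ha)
  have hb₀ : b ≠ 0 := norm_pos_iff.mp (hm.trans_le hb)
  have hab : ‖a‖⁻¹ * ‖b‖⁻¹ ≤ (m ^ 2)⁻¹ := by
    rw [← mul_inv, sq]
    exact inv_anti₀ (mul_pos hm hm) (mul_le_mul ha hb hm.le (norm_nonneg a))
  calc ‖a⁻¹ - b⁻¹‖ = ‖a‖⁻¹ * ‖b‖⁻¹ * ‖a - b‖ := by
        rw [inv_sub_inv' ha₀ hb₀, norm_mul, norm_mul, norm_inv, norm_inv, norm_sub_rev]; ring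
    _ ≤ (m ^ 2)⁻¹ * ‖a - b‖ := mul_le_mul_of_nonneg_right hab (norm_nonneg _)

/-- `‖f‖` attains a positive minimum `m` on the compact range of `f`, so `z ↦ z⁻¹` is
`m⁻²`-Lipschitz there. -/
lemma exists_mc_inv_le {f : ℝ → ℂ} (hc : Continuous f) (hp : Periodic f (2 * π))
    (hf : ∀ θ, f θ ≠ 0) : ∃ c, 0 ≤ c ∧ ∀ x, mc (fun θ => (f θ)⁻¹) x ≤ c * mc f x := by
  have hK := hp.compact_of_continuous Real.two_pi_pos.ne' hc
  obtain ⟨M, hM⟩ := isBounded_iff_forall_norm_le.mp hK.isBounded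
  obtain ⟨_, ⟨θ₀, rfl⟩, hmin⟩ :=
    hK.exists_isMinOn (Set.range_nonempty f) continuous_norm.continuousOn
  have hm : 0 < ‖f θ₀‖ := norm_pos_iff.mpr (hf θ₀)
  refine ⟨(‖f θ₀‖ ^ 2)⁻¹, by positivity, mc_le_mul_mc (fun θ => hM _ ⟨θ, rfl⟩) (by positivity)
    fun a b => norm_inv_sub_inv_le hm (hmin ⟨a, rfl⟩) (hmin ⟨b, rfl⟩)⟩

lemma MemH.inv {w : ℝ → ℝ} {f : ℝ → ℂ} (hf : MemH w f) (hf₀ : ∀ θ, f θ ≠ 0) :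
    MemH w (fun θ => (f θ)⁻¹) := by
  obtain ⟨hc, hp, C, hC⟩ := hf
  obtain ⟨c, hc₀, hcf⟩ := exists_mc_inv_le hc hp hf₀
  refine ⟨hc.inv₀ hf₀, fun θ => by simp only [hp θ], c * C, fun x hx hxπ => ?_⟩
  calc mc (fun θ => (f θ)⁻¹) x ≤ c * mc f x := hcf x
    _ ≤ c * (C * w x) := mul_le_mul_of_nonneg_left (hC x hx hxπ) hc₀
    _ = c * C * w x := by ring

lemma MemH0.inv {w : ℝ → ℝ} {f : ℝ → ℂ} (hf : MemH0 w f) (hf₀ : ∀ θ, f θ ≠ 0) :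
    MemH0 w (fun θ => (f θ)⁻¹) := by
  obtain ⟨⟨hc, hp, hC⟩, hlim⟩ := hf
  obtain ⟨c, hc₀, hcf⟩ := exists_mc_inv_le hc hp hf₀
  refine ⟨MemH.inv ⟨hc, hp, hC⟩ hf₀, squeeze_zero_norm (fun x => ?_) (by
    simpa using (hlim.norm.const_mul c))⟩
  simp only [norm_div, Real.norm_eq_abs, abs_of_nonneg (mc_nonneg _ _)]
  rw [mul_div_assoc']
  exact div_le_div_of_nonneg_right (hcf x) (abs_nonneg _)

theorem stmt7_general (w : ℝ → ℝ) (f : ℝ → ℂ) :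
    (MemH w f →
      ((∃ g : ℝ → ℂ, MemH w g ∧ ∀ θ, f θ * g θ = 1) ↔ ∀ θ, f θ ≠ 0)) ∧
    (MemH0 w f →
      ((∃ g : ℝ → ℂ, MemH0 w g ∧ ∀ θ, f θ * g θ = 1) ↔ ∀ θ, f θ ≠ 0)) :=
  ⟨fun hf => ⟨fun ⟨_, _, hg⟩ θ => left_ne_zero_of_mul_eq_one (hg θ),
      fun hf₀ => ⟨_, hf.inv hf₀, fun θ => mul_inv_cancel₀ (hf₀ θ)⟩⟩,
    fun hf => ⟨fun ⟨_, _, hg⟩ θ => left_ne_zero_of_mul_eq_one (hg θ),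
      fun hf₀ => ⟨_, hf.inv hf₀, fun θ => mul_inv_cancel₀ (hf₀ θ)⟩⟩⟩

/-- In `𝓗^ω` and in `𝓗₀^ω`, a function is invertible iff it has no
zeros on the circle. -/
theorem stmt7 (w : ℝ → ℝ) (hw : BariStechkin w) (f : ℝ → ℂ) :
    (MemH w f →
      ((∃ g : ℝ → ℂ, MemH w g ∧ ∀ θ, f θ * g θ = 1) ↔ ∀ θ, f θ ≠ 0)) ∧
    (MemH0 w f →
      ((∃ g : ℝ → ℂ, MemH0 w g ∧ ∀ θ, f θ * g θ = 1) ↔ ∀ θ, f θ ≠ 0)) :=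
  stmt7_general w f

end
end

section
/- Define inductively ℓ₁(x) := log x for x > x₁ := 1, and for k ≥ 2, ℓ_k(x) := log(ℓ_{k−1}(x)) for x > x_k, where x_k is determined by ℓ_{k−1}(x_k) = 1. Then for every m ∈ ℕ, every γ ∈ (0,1) and every finite sequence β₁,…,β_m ∈ ℝ, there exist positive constants b₁,…,b_m such that the function ω(x) := x^γ ∏_{k=1}^m [ℓ_k(b_k/x)]^{β_k} is well defined and positive for all 0 < x ≤ π (i.e., b_k/x > x_k for all such x) and belongs to the Bari–Stechkin class. -/
open scoped Real
open Filter MeasureTheory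

noncomputable section

/-- Iterated logarithms: `ell 0 = id`, `ell (k+1) = log ∘ ell k`, so `ell k = ℓ_k`. -/
def ell : ℕ → ℝ → ℝ
  | 0, x => x
  | k + 1, x => Real.log (ell k x)

/-- The thresholds `x_k`: `x_1 = 1` and `x_{k+1} = e^{x_k}`, so `ℓ_{k−1}(x_k) = 1`. -/
def xt : ℕ → ℝ
  | 0 => 0
  | 1 => 1
  | k + 2 => Real.exp (xt (k + 1))

/-! With `b_k = π e^R` we have `t = b_k/x ≥ e^R` on `(0, π]`. Since
`t ℓ_{k+1}'(t) = 1/(ℓ_1(t) ⋯ ℓ_k(t))` and every factor is at least `1`, the logarithmic derivative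
of `x ↦ ∏ ℓ_k(b_k/x)^{β_k}` is at most `∑ |β_k| / (x log t) ≤ ∑ |β_k| / (x R)` in absolute value.
For `R` large this makes `ω(x)/x^{γ/2}` increasing and `ω(x)/x^{(1+γ)/2}` decreasing on `(0, π]`,
and comparing `ω` with these two powers of `x` gives every Bari–Stechkin condition. -/

open Set Real Topology

section BariStechkinCriterion

variable {w : ℝ → ℝ}

theorem le_div_rpow_mul_rpow_of_monotoneOn {a x y : ℝ}
    (hmono : MonotoneOn (fun x => w x / x ^ a) (Ioc 0 π)) (hy : 0 < y) (hyx : y ≤ x)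
    (hxπ : x ≤ π) : w y ≤ w x / x ^ a * y ^ a :=
  (div_le_iff₀ (rpow_pos_of_pos hy a)).1
    (hmono ⟨hy, hyx.trans hxπ⟩ ⟨hy.trans_le hyx, hxπ⟩ hyx)

theorem le_div_rpow_mul_rpow_of_antitoneOn {c x y : ℝ}
    (hanti : AntitoneOn (fun x => w x / x ^ c) (Ioc 0 π)) (hx : 0 < x) (hxy : x ≤ y)
    (hyπ : y ≤ π) : w y ≤ w x / x ^ c * y ^ c :=
  (div_le_iff₀ (rpow_pos_of_pos (hx.trans_le hxy) c)).1
    (hanti ⟨hx, hxy.trans hyπ⟩ ⟨hx.trans_le hxy, hyπ⟩ hxy)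

theorem intervalIntegrable_and_integral_le_of_le {f g : ℝ → ℝ} {u v : ℝ} (huv : u ≤ v)
    (hf : Measurable f) (hg : IntervalIntegrable g volume u v)
    (h : ∀ y ∈ Ioc u v, 0 ≤ f y ∧ f y ≤ g y) :
    IntervalIntegrable f volume u v ∧ ∫ y in u..v, f y ≤ ∫ y in u..v, g y := by
  have hf' : IntervalIntegrable f volume u v := by
    refine hg.mono_fun' hf.aestronglyMeasurable ?_
    rw [uIoc_of_le huv]
    refine (ae_restrict_iff' measurableSet_Ioc).2 (ae_of_all _ fun y hy => ?_)
    exact (Real.norm_of_nonneg (h y hy).1).trans_le (h y hy).2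
  exact ⟨hf', intervalIntegral.integral_mono_on_of_le_Ioo huv hf' hg fun y hy =>
    (h y (Ioo_subset_Ioc_self hy)).2⟩

theorem intervalIntegrable_div_and_integral_div_le {a x : ℝ} (ha : 0 < a) (hw : Measurable w)
    (hpos : ∀ y, 0 < y → y ≤ π → 0 < w y) (hmono : MonotoneOn (fun x => w x / x ^ a) (Ioc 0 π))
    (hx : 0 < x) (hxπ : x ≤ π) :
    IntervalIntegrable (fun y => w y / y) volume 0 x ∧ ∫ y in (0 : ℝ)..x, w y / y ≤ w x / a := by
  have hbound : ∀ y ∈ Ioc 0 x, 0 ≤ w y / y ∧ w y / y ≤ w x / x ^ a * y ^ (a - 1) :=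
    fun y ⟨hy, hyx⟩ => ⟨(div_pos (hpos y hy (hyx.trans hxπ)) hy).le, by
      rw [rpow_sub_one hy.ne', ← mul_div_assoc]
      exact div_le_div_of_nonneg_right
        (le_div_rpow_mul_rpow_of_monotoneOn hmono hy hyx hxπ) hy.le⟩
  obtain ⟨hint, hle⟩ := intervalIntegrable_and_integral_le_of_le hx.le
    (f := fun y => w y / y) (hw.div measurable_id)
    ((intervalIntegral.intervalIntegrable_rpow' (by linarith : -1 < a - 1)).const_mul _) hbound
  refine ⟨hint, hle.trans_eq ?_⟩
  rw [intervalIntegral.integral_const_mul, integral_rpow (Or.inl (by linarith)), sub_add_cancel,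
    zero_rpow ha.ne', sub_zero]
  field_simp

theorem intervalIntegrable_div_sq_and_mul_integral_le {c x : ℝ} (hc : c < 1)
    (hw : Measurable w) (hpos : ∀ y, 0 < y → y ≤ π → 0 < w y)
    (hanti : AntitoneOn (fun x => w x / x ^ c) (Ioc 0 π)) (hx : 0 < x) (hxπ : x ≤ π) :
    IntervalIntegrable (fun y => w y / y ^ 2) volume x π ∧
      x * ∫ y in x..π, w y / y ^ 2 ≤ w x / (1 - c) := by
  have hC : 0 ≤ w x / x ^ c := (div_pos (hpos x hx hxπ) (rpow_pos_of_pos hx c)).le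
  have h0 : (0 : ℝ) ∉ uIcc x π := by
    rw [uIcc_of_le hxπ]
    exact fun h => hx.not_ge h.1
  have hbound : ∀ y ∈ Ioc x π, 0 ≤ w y / y ^ 2 ∧ w y / y ^ 2 ≤ w x / x ^ c * y ^ (c - 2) :=
    fun y ⟨hxy, hyπ⟩ => by
      have hy : 0 < y := hx.trans hxy
      refine ⟨(div_pos (hpos y hy hyπ) (by positivity)).le, ?_⟩
      rw [rpow_sub hy, rpow_two, ← mul_div_assoc]
      exact div_le_div_of_nonneg_right
        (le_div_rpow_mul_rpow_of_antitoneOn hanti hx hxy.le hyπ) (by positivity)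
  obtain ⟨hint, hle⟩ := intervalIntegrable_and_integral_le_of_le hxπ
    (f := fun y => w y / y ^ 2) (hw.div (measurable_id.pow_const 2))
    ((intervalIntegral.intervalIntegrable_rpow (Or.inr h0)).const_mul _) hbound
  refine ⟨hint, ?_⟩
  have hπc : 0 ≤ π ^ (c - 1) := rpow_nonneg pi_pos.le _
  calc x * ∫ y in x..π, w y / y ^ 2 ≤ x * ∫ y in x..π, w x / x ^ c * y ^ (c - 2) := by gcongr
    _ = x * (w x / x ^ c * ((x ^ (c - 1) - π ^ (c - 1)) / (1 - c))) := by
      rw [intervalIntegral.integral_const_mul,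
        integral_rpow (Or.inr ⟨by linarith, h0⟩), show c - 2 + 1 = c - 1 by ring,
        ← neg_div_neg_eq (x ^ (c - 1) - π ^ (c - 1)), neg_sub, neg_sub]
    _ ≤ x * (w x / x ^ c * (x ^ (c - 1) / (1 - c))) := by
      gcongr
      linarith
    _ = w x / (1 - c) := by
      rw [rpow_sub_one hx.ne']
      field_simp

theorem bariStechkin_of_monotoneOn_div_rpow {a c : ℝ} (ha : 0 < a) (hc : c < 1)
    (hw : Measurable w) (hpos : ∀ x, 0 < x → x ≤ π → 0 < w x)
    (hmono : MonotoneOn (fun x => w x / x ^ a) (Ioc 0 π))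
    (hanti : AntitoneOn (fun x => w x / x ^ c) (Ioc 0 π)) : BariStechkin w := by
  refine ⟨⟨1, one_pos, fun x y hx hxy hyπ => ?_⟩, hpos, ?_,
    fun x hx hxπ => (intervalIntegrable_div_and_integral_div_le ha hw hpos hmono hx hxπ).1,
    ⟨1 / a, fun x hx hxπ => ?_⟩,
    fun x hx hxπ => (intervalIntegrable_div_sq_and_mul_integral_le hc hw hpos hanti hx hxπ).1,
    ⟨1 / (1 - c), fun x hx hxπ => ?_⟩⟩
  · have hy : 0 < y := hx.trans_le hxy
    have hwy := hpos y hy hyπ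
    calc w x ≤ w y / y ^ a * x ^ a := le_div_rpow_mul_rpow_of_monotoneOn hmono hx hxy hyπ
      _ ≤ w y / y ^ a * y ^ a := by gcongr
      _ = 1 * w y := by field_simp
  · have hlim : Tendsto (fun x => w π / π ^ a * x ^ a) (𝓝[>] 0) (𝓝 0) := by
      simpa using (((continuous_rpow_const ha.le).tendsto' 0 0 (zero_rpow ha.ne')).const_mul
        (w π / π ^ a)).mono_left nhdsWithin_le_nhds
    have hev : ∀ᶠ x in 𝓝[>] (0 : ℝ), x ∈ Ioc 0 π := Ioc_mem_nhdsGT pi_pos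
    refine squeeze_zero' ?_ ?_ hlim
    · filter_upwards [hev] with x hx using (hpos x hx.1 hx.2).le
    · filter_upwards [hev] with x hx using
        le_div_rpow_mul_rpow_of_monotoneOn hmono hx.1 hx.2 le_rfl
  · exact (intervalIntegrable_div_and_integral_div_le ha hw hpos hmono hx hxπ).2.trans_eq
      (by ring)
  · exact (intervalIntegrable_div_sq_and_mul_integral_le hc hw hpos hanti hx hxπ).2.trans_eq
      (by ring)

end BariStechkinCriterion

theorem monotoneOn_mul_log_add {s : Set ℝ} (hs : Convex ℝ s) (hs0 : s ⊆ Ioi 0) {h : ℝ → ℝ}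
    {ε c : ℝ} (hh : ∀ x ∈ s, ∃ d, HasDerivAt h d x ∧ |x * d| ≤ ε) (hc : ε ≤ c) :
    MonotoneOn (fun x => c * log x + h x) s := by
  choose! h' hh' hbound using hh
  have hd : ∀ x ∈ s, HasDerivAt (fun x => c * log x + h x) (c * x⁻¹ + h' x) x := fun x hx =>
    ((hasDerivAt_log (hs0 hx).ne').const_mul c).add (hh' x hx)
  refine monotoneOn_of_deriv_nonneg hs (fun x hx => (hd x hx).continuousAt.continuousWithinAt)
    (fun x hx => (hd x (interior_subset hx)).differentiableAt.differentiableWithinAt)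
    fun x hx => ?_
  replace hx := interior_subset hx
  have hx0 : 0 < x := hs0 hx
  have : 0 ≤ c + x * h' x := by linarith [(abs_le.1 (hbound x hx)).1]
  rw [(hd x hx).deriv]
  calc 0 ≤ x⁻¹ * (c + x * h' x) := by positivity
    _ = c * x⁻¹ + h' x := by field_simp

theorem antitoneOn_mul_log_add {s : Set ℝ} (hs : Convex ℝ s) (hs0 : s ⊆ Ioi 0) {h : ℝ → ℝ}
    {ε c : ℝ} (hh : ∀ x ∈ s, ∃ d, HasDerivAt h d x ∧ |x * d| ≤ ε) (hc : c ≤ -ε) :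
    AntitoneOn (fun x => c * log x + h x) s := by
  have hneg : ∀ x ∈ s, ∃ d, HasDerivAt (fun x => -h x) d x ∧ |x * d| ≤ ε := fun x hx => by
    obtain ⟨d, hd, hbound⟩ := hh x hx
    exact ⟨-d, hd.neg, by rwa [mul_neg, abs_neg]⟩
  simpa [add_comm] using (monotoneOn_mul_log_add hs hs0 hneg (le_neg_of_le_neg hc)).neg

theorem ell_succ_eq_ell_log (k : ℕ) (t : ℝ) : ell (k + 1) t = ell k (log t) := by
  induction k with
  | zero => rfl
  | succ k ih => exact congrArg log ih

theorem monotone_xt : Monotone xt := by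
  refine monotone_nat_of_le_succ fun k => ?_
  rcases k with _ | k
  · exact zero_le_one
  · exact (le_add_of_nonneg_right zero_le_one).trans (add_one_le_exp (xt (k + 1)))

theorem one_le_ell {k : ℕ} {t : ℝ} (ht : xt (k + 1) ≤ t) : 1 ≤ ell k t := by
  induction k generalizing t with
  | zero => exact ht
  | succ k ih =>
    have hexp : exp (xt (k + 1)) ≤ t := ht
    rw [ell_succ_eq_ell_log]
    exact ih ((le_log_iff_exp_le ((exp_pos _).trans_le hexp)).2 hexp)

theorem one_le_ell_of_lt {j n : ℕ} {t : ℝ} (hj : j < n) (ht : xt n ≤ t) : 1 ≤ ell j t :=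
  one_le_ell ((monotone_xt hj).trans ht)

theorem hasDerivAt_ell {k : ℕ} {t : ℝ} (h : ∀ j < k, ell j t ≠ 0) :
    HasDerivAt (ell k) (∏ j ∈ Finset.range k, ell j t)⁻¹ t := by
  induction k with
  | zero => exact (hasDerivAt_id' t).congr_deriv (by simp)
  | succ k ih =>
    have hlog := (ih fun j hj => h j (by omega)).log (h k (by omega))
    rwa [Finset.prod_range_succ, mul_inv, ← div_eq_mul_inv]

@[fun_prop]
theorem measurable_ell (k : ℕ) : Measurable (ell k) := by
  induction k with
  | zero => exact measurable_id
  | succ k ih => exact measurable_log.comp ih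

theorem mul_log_le_prod_ell {k : ℕ} {t : ℝ} (h : ∀ j < k + 2, 1 ≤ ell j t) :
    t * log t ≤ ∏ j ∈ Finset.range (k + 2), ell j t := by
  have hmem : ∀ {j}, j ∈ Finset.range (k + 2) → 1 ≤ ell j t := fun hj =>
    h _ (Finset.mem_range.1 hj)
  calc t * log t = ∏ j ∈ Finset.range 2, ell j t := by simp [Finset.prod_range_succ, ell]
    _ ≤ ∏ j ∈ Finset.range (k + 2), ell j t :=
      Finset.prod_le_prod_of_subset_of_one_le (Finset.range_subset_range.2 (by omega))
        (fun _ hj => zero_le_one.trans (hmem (Finset.range_subset_range.2 (by omega) hj)))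
        fun _ hj _ => hmem hj

theorem hasDerivAt_sum_ell {m : ℕ} (β : ℕ → ℝ) {t : ℝ} (ht : xt (m + 2) ≤ t) :
    HasDerivAt (fun t => ∑ k ∈ Finset.Icc 1 m, β k * ell (k + 1) t)
      (∑ k ∈ Finset.Icc 1 m, β k * (∏ j ∈ Finset.range (k + 1), ell j t)⁻¹) t := by
  refine HasDerivAt.fun_sum fun k hk => (hasDerivAt_ell fun j hj => ?_).const_mul (β k)
  have := one_le_ell_of_lt (by simp only [Finset.mem_Icc] at hk; omega : j < m + 2) ht
  positivity

theorem abs_mul_sum_inv_prod_ell_le {m : ℕ} (β : ℕ → ℝ) {t : ℝ} (ht : xt (m + 2) ≤ t) :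
    |t * ∑ k ∈ Finset.Icc 1 m, β k * (∏ j ∈ Finset.range (k + 1), ell j t)⁻¹| ≤
      (∑ k ∈ Finset.Icc 1 m, |β k|) / log t := by
  have hlog : 1 ≤ log t := one_le_ell_of_lt (by omega : 1 < m + 2) ht
  have ht0 : 0 < t := zero_lt_one.trans_le (one_le_ell_of_lt (by omega : 0 < m + 2) ht)
  rw [Finset.mul_sum, Finset.sum_div]
  refine (Finset.abs_sum_le_sum_abs _ _).trans (Finset.sum_le_sum fun k hk => ?_)
  obtain ⟨n, rfl⟩ : ∃ n, k = n + 1 := ⟨k - 1, by simp only [Finset.mem_Icc] at hk; omega⟩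
  have hprod := mul_log_le_prod_ell (k := n) fun j hj =>
    one_le_ell_of_lt (by simp only [Finset.mem_Icc] at hk; omega : j < m + 2) ht
  have hpos : 0 < t * log t := by positivity
  rw [abs_mul, abs_mul, abs_of_pos ht0, abs_inv, abs_of_pos (hpos.trans_le hprod)]
  calc t * (|β (n + 1)| * (∏ j ∈ Finset.range (n + 2), ell j t)⁻¹)
      ≤ t * (|β (n + 1)| * (t * log t)⁻¹) := by gcongr
    _ = |β (n + 1)| / log t := by field_simp

def iterLogWeight (m : ℕ) (γ : ℝ) (β : ℕ → ℝ) (b x : ℝ) : ℝ :=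
  x ^ γ * ∏ k ∈ Finset.Icc 1 m, ell k (b / x) ^ β k

theorem exp_le_pi_mul_exp_div {R x : ℝ} (hx : 0 < x) (hxπ : x ≤ π) : exp R ≤ π * exp R / x := by
  rw [le_div_iff₀ hx]
  nlinarith [exp_pos R]

theorem lt_pi_mul_exp_div {R x : ℝ} (hx : 0 < x) (hxπ : x ≤ π) : R < π * exp R / x :=
  (lt_add_one R).trans_le ((add_one_le_exp R).trans (exp_le_pi_mul_exp_div hx hxπ))

theorem le_log_pi_mul_exp_div {R x : ℝ} (hx : 0 < x) (hxπ : x ≤ π) :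
    R ≤ log (π * exp R / x) :=
  (le_log_iff_exp_le ((exp_pos R).trans_le (exp_le_pi_mul_exp_div hx hxπ))).2
    (exp_le_pi_mul_exp_div hx hxπ)

theorem iterLogWeight_div_rpow_eq_exp {m : ℕ} {γ : ℝ} {β : ℕ → ℝ} {b x : ℝ} (hx : 0 < x)
    (hb : xt (m + 2) ≤ b / x) (c : ℝ) :
    iterLogWeight m γ β b x / x ^ c =
      exp ((γ - c) * log x + ∑ k ∈ Finset.Icc 1 m, β k * ell (k + 1) (b / x)) := by
  have hpow : ∀ k ∈ Finset.Icc 1 m, ell k (b / x) ^ β k = exp (β k * ell (k + 1) (b / x)) := by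
    intro k hk
    rw [Finset.mem_Icc] at hk
    have hk : 0 < ell k (b / x) := one_pos.trans_le (one_le_ell_of_lt (by omega) hb)
    rw [rpow_def_of_pos hk, mul_comm]
    rfl
  rw [iterLogWeight, Finset.prod_congr rfl hpow, ← exp_sum, rpow_def_of_pos hx,
    rpow_def_of_pos hx, ← exp_add, ← exp_sub]
  ring_nf

theorem exists_hasDerivAt_sum_ell_pi_mul_exp_div {m : ℕ} (β : ℕ → ℝ) {R x : ℝ}
    (hR : xt (m + 2) ≤ R) (hx : 0 < x) (hxπ : x ≤ π) :
    ∃ d, HasDerivAt (fun x => ∑ k ∈ Finset.Icc 1 m, β k * ell (k + 1) (π * exp R / x)) d x ∧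
      |x * d| ≤ (∑ k ∈ Finset.Icc 1 m, |β k|) / R := by
  set t := π * exp R / x with ht_def
  have ht : xt (m + 2) ≤ t := hR.trans (lt_pi_mul_exp_div hx hxπ).le
  have hR0 : 0 < R := zero_lt_one.trans_le ((monotone_xt (by omega : 1 ≤ m + 2)).trans hR)
  have hdiv : HasDerivAt (fun y => π * exp R / y) (-t / x) x :=
    ((hasDerivAt_const x (π * exp R)).div (hasDerivAt_id' x) hx.ne').congr_deriv (by
      rw [ht_def]; field_simp; ring)
  have hcomp := (hasDerivAt_sum_ell β ht).comp x hdiv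
  refine ⟨_, hcomp, ?_⟩
  rw [show ∀ D : ℝ, x * (D * (-t / x)) = -(t * D) from fun D => by field_simp, abs_neg]
  refine (abs_mul_sum_inv_prod_ell_le β ht).trans ?_
  gcongr
  exact le_log_pi_mul_exp_div hx hxπ

theorem monotoneOn_iterLogWeight_div_rpow {m : ℕ} {γ c R : ℝ} (β : ℕ → ℝ)
    (hR : xt (m + 2) ≤ R) (hc : (∑ k ∈ Finset.Icc 1 m, |β k|) / R ≤ γ - c) :
    MonotoneOn (fun x => iterLogWeight m γ β (π * exp R) x / x ^ c) (Ioc 0 π) := by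
  have hlog := monotoneOn_mul_log_add (convex_Ioc 0 π) Ioc_subset_Ioi_self
    (fun x hx => exists_hasDerivAt_sum_ell_pi_mul_exp_div β hR hx.1 hx.2) hc
  refine (exp_monotone.comp_monotoneOn hlog).congr fun x hx => ?_
  exact (iterLogWeight_div_rpow_eq_exp hx.1 (hR.trans (lt_pi_mul_exp_div hx.1 hx.2).le) c).symm

theorem antitoneOn_iterLogWeight_div_rpow {m : ℕ} {γ c R : ℝ} (β : ℕ → ℝ)
    (hR : xt (m + 2) ≤ R) (hc : (∑ k ∈ Finset.Icc 1 m, |β k|) / R ≤ c - γ) :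
    AntitoneOn (fun x => iterLogWeight m γ β (π * exp R) x / x ^ c) (Ioc 0 π) := by
  have hlog := antitoneOn_mul_log_add (c := γ - c) (convex_Ioc 0 π) Ioc_subset_Ioi_self
    (fun x hx => exists_hasDerivAt_sum_ell_pi_mul_exp_div β hR hx.1 hx.2) (by linarith)
  refine (exp_monotone.comp_antitoneOn hlog).congr fun x hx => ?_
  exact (iterLogWeight_div_rpow_eq_exp hx.1 (hR.trans (lt_pi_mul_exp_div hx.1 hx.2).le) c).symm

theorem measurable_iterLogWeight (m : ℕ) (γ : ℝ) (β : ℕ → ℝ) (b : ℝ) :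
    Measurable (iterLogWeight m γ β b) := by
  unfold iterLogWeight
  fun_prop

theorem iterLogWeight_pos {m : ℕ} {γ : ℝ} {β : ℕ → ℝ} {b x : ℝ} (hx : 0 < x)
    (hb : xt (m + 2) ≤ b / x) : 0 < iterLogWeight m γ β b x := by
  have h := iterLogWeight_div_rpow_eq_exp (γ := γ) (β := β) hx hb 0
  rw [rpow_zero, div_one] at h
  exact h ▸ exp_pos _

/-- For every `m`, `γ ∈ (0,1)` and reals `β₁,…,β_m` there are positive
constants `b₁,…,b_m` such that `ω(x) = x^γ ∏_k ℓ_k(b_k/x)^{β_k}` is well defined and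
positive on `(0,π]` and belongs to the Bari–Stechkin class. -/
theorem stmt16 (m : ℕ) (γ : ℝ) (hγ : 0 < γ ∧ γ < 1) (β : ℕ → ℝ) :
    ∃ b : ℕ → ℝ, (∀ k ∈ Finset.Icc 1 m, 0 < b k) ∧
      (∀ x : ℝ, 0 < x → x ≤ π → ∀ k ∈ Finset.Icc 1 m,
        xt k < b k / x ∧ 0 < ell k (b k / x)) ∧
      BariStechkin (fun x => x ^ γ * ∏ k ∈ Finset.Icc 1 m, ell k (b k / x) ^ β k) := by
  obtain ⟨hγ0, hγ1⟩ := hγ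
  set S := ∑ k ∈ Finset.Icc 1 m, |β k|
  set δ := min (γ / 2) ((1 - γ) / 2)
  set R := max (xt (m + 2)) (S / δ)
  have hδ : 0 < δ := lt_min (by linarith) (by linarith)
  have hxtR : xt (m + 2) ≤ R := le_max_left _ _
  have hR : 0 < R := one_pos.trans_le ((monotone_xt (by omega : 1 ≤ m + 2)).trans hxtR)
  have hSR : S / R ≤ δ :=
    (div_le_iff₀ hR).2 (by rw [mul_comm]; exact (div_le_iff₀ hδ).1 (le_max_right _ _))
  have hxt : ∀ x, 0 < x → x ≤ π → xt (m + 2) < π * exp R / x := fun x hx hxπ =>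
    hxtR.trans_lt (lt_pi_mul_exp_div hx hxπ)
  refine ⟨fun _ => π * exp R, fun _ _ => by positivity, fun x hx hxπ k hk => ?_, ?_⟩
  · rw [Finset.mem_Icc] at hk
    exact ⟨(monotone_xt (by omega)).trans_lt (hxt x hx hxπ),
      one_pos.trans_le (one_le_ell_of_lt (by omega) (hxt x hx hxπ).le)⟩
  · exact bariStechkin_of_monotoneOn_div_rpow (a := γ / 2) (c := (1 + γ) / 2) (by linarith)
      (by linarith) (measurable_iterLogWeight m γ β _)
      (fun x hx hxπ => iterLogWeight_pos hx (hxt x hx hxπ).le)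
      (monotoneOn_iterLogWeight_div_rpow β hxtR (by linarith [min_le_left (γ / 2) ((1 - γ) / 2)]))
      (antitoneOn_iterLogWeight_div_rpow β hxtR
        (by linarith [min_le_right (γ / 2) ((1 - γ) / 2)]))
end
end
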